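/- Let S be a closed symmetric operator with non-dense domain in a complex Hilbert space H, set H₀ := closure(dom S), and assume H₀^⊥ is finite-dimensional and nonzero. Let S̃ be a densely defined maximal dissipative extension of S in H with Hilbert-space adjoint S̃*. Let S̃₀ be the compression of S̃ to H₀ (domain dom S̃ ∩ H₀, acting as x ↦ P_{H₀}(S̃x)) and let S̃_{*0} be the compression of S̃* to H₀. Then dom S̃₀ is dense in H₀ and S̃_{*0} = (S̃₀)*, the adjoint being computed in the Hilbert space H₀. -/

import Mathlib

set_option synthInstance.maxHeartbeats 1000000

open scoped ComplexInnerProductSpace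

variable {H : Type*} [NormedAddCommGroup H] [InnerProductSpace ℂ H] [CompleteSpace H]

/-- The compression of an operator `T` in `H` to a closed subspace `K`: the operator in the
Hilbert space `K` with domain `dom T ∩ K` acting as `x ↦ P_K (T x)`. -/
noncomputable def compression (K : Submodule ℂ H) [CompleteSpace K] (T : H →ₗ.[ℂ] H) :
    (↥K) →ₗ.[ℂ] (↥K) where
  domain := T.domain.comap K.subtype
  toFun := K.orthogonalProjectionOnto.toLinearMap ∘ₗ T.toFun ∘ₗ
    ((K.subtype.domRestrict (T.domain.comap K.subtype)).codRestrict T.domain fun x => x.2)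

/-- A dissipative operator: `Im (Tf, f) ≥ 0` for all `f ∈ dom T`, where `(·,·)` is the classical
inner product (linear in the first argument), i.e. `⟪f, Tf⟫` in Mathlib's convention. -/
def LinearPMap.IsDissipative {E : Type*} [NormedAddCommGroup E] [InnerProductSpace ℂ E]
    (T : E →ₗ.[ℂ] E) : Prop :=
  ∀ x : T.domain, 0 ≤ (⟪(x : E), T x⟫).im

/-- A maximal dissipative operator: dissipative with no proper dissipative extension. -/
def LinearPMap.IsMaximalDissipative {E : Type*} [NormedAddCommGroup E] [InnerProductSpace ℂ E]
    (T : E →ₗ.[ℂ] E) : Prop :=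
  T.IsDissipative ∧ ∀ T' : E →ₗ.[ℂ] E, T'.IsDissipative → T ≤ T' → T' = T

/-!
For `v ∈ H₀` and `f ∈ dom S̃ ∩ H₀` we have `⟪v, P_{H₀} S̃ f⟫ = ⟪v, S̃ f⟫`, so the formal adjoint
relation between `S̃` and `S̃*` passes to the compressions, giving `S̃_{*0} ⊆ (S̃₀)*`.
Conversely, if `v ∈ dom (S̃₀)*` then `f ↦ ⟪v, S̃ f⟫` is continuous on `dom S̃ ∩ H₀`, a closed subspace
of `dom S̃` of finite codimension since `H ⧸ H₀ ≅ H₀ᗮ` is finite-dimensional. A linear functional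
continuous on such a subspace is continuous everywhere (its kernel contains a closed subspace of
finite codimension, hence is closed), so `v ∈ dom S̃*`.
-/

section FiniteCodimension

variable {𝕜 E : Type*} [NontriviallyNormedField 𝕜] [CompleteSpace 𝕜]
  [AddCommGroup E] [TopologicalSpace E] [IsTopologicalAddGroup E] [Module 𝕜 E]
  [ContinuousSMul 𝕜 E]

theorem LinearMap.continuous_of_continuousOn_of_cofg (f : E →ₗ[𝕜] 𝕜) {p : Submodule 𝕜 E}
    (hp : IsClosed (p : Set E)) (hcofg : p.CoFG) (hf : ContinuousOn f p) : Continuous f := by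
  rw [f.continuous_iff_isClosed_ker]
  have hclosed : IsClosed ((p ⊓ LinearMap.ker f : Submodule 𝕜 E) : Set E) :=
    hf.preimage_isClosed_of_isClosed hp isClosed_singleton
  have : (p ⊓ LinearMap.ker f).CoFG := hcofg.inf (Submodule.CoFG.ker f)
  exact Submodule.isClosed_mono_of_finiteDimensional_quotient hclosed inf_le_right

end FiniteCodimension

theorem Submodule.cofg_of_finiteDimensional_orthogonal {𝕜 E : Type*} [RCLike 𝕜]
    [NormedAddCommGroup E] [InnerProductSpace 𝕜 E] (K : Submodule 𝕜 E)
    [K.HasOrthogonalProjection] [FiniteDimensional 𝕜 Kᗮ] : K.CoFG :=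
  .equiv (K.quotientEquivOfIsCompl Kᗮ K.isCompl_orthogonal).symm

section Compression

open LinearPMap

variable {E : Type*} [NormedAddCommGroup E] [InnerProductSpace ℂ E] (K : Submodule ℂ E)
  [CompleteSpace K]

theorem compression_apply (T : E →ₗ.[ℂ] E) (x : (compression K T).domain) :
    compression K T x = K.orthogonalProjectionOnto (T ⟨((x : K) : E), x.2⟩) := rfl

theorem dense_compression_topologicalClosure_domain {D : Submodule ℂ E}
    [CompleteSpace D.topologicalClosure] {T : E →ₗ.[ℂ] E} (hD : D ≤ T.domain) :
    Dense ((compression D.topologicalClosure T).domain : Set D.topologicalClosure) := by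
  intro x
  rw [closure_subtype]
  refine closure_mono ?_ x.2
  intro y hy
  exact ⟨⟨y, D.le_topologicalClosure hy⟩, hD hy, rfl⟩

theorem LinearPMap.IsFormalAdjoint.compression {T T' : E →ₗ.[ℂ] E} (h : T.IsFormalAdjoint T') :
    (compression K T).IsFormalAdjoint (compression K T') := fun x y => by
  simp only [compression_apply, Submodule.inner_orthogonalProjectionOnto_eq_of_mem_right,
    Submodule.inner_orthogonalProjectionOnto_eq_of_mem_left]
  exact h ⟨_, x.2⟩ ⟨_, y.2⟩

variable [CompleteSpace E]

theorem mem_adjoint_domain_of_mem_adjoint_compression_domain (hK : K.CoFG) (T : E →ₗ.[ℂ] E)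
    {v : K} (hv : v ∈ (compression K T)†.domain) : (v : E) ∈ T†.domain := by
  rw [mem_adjoint_domain_iff] at hv ⊢
  set p : Submodule ℂ T.domain := K.comap T.domain.subtype
  have hp : IsClosed (p : Set T.domain) :=
    (completeSpace_coe_iff_isComplete.mp ‹_›).isClosed.preimage continuous_subtype_val
  have hcofg : p.CoFG := by
    have hp_ker : p = LinearMap.ker (K.mkQ ∘ₗ T.domain.subtype) := by
      rw [LinearMap.ker_comp, Submodule.ker_mkQ]
    rw [hp_ker]
    exact Submodule.CoFG.ker _
  refine LinearMap.continuous_of_continuousOn_of_cofg _ hp hcofg ?_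
  rw [continuousOn_iff_continuous_domRestrict]
  let ι : p → (compression K T).domain := fun x => ⟨⟨x, x.2⟩, (x : T.domain).2⟩
  have hι : Continuous ι := by fun_prop
  refine (hv.comp hι).congr fun x => ?_
  exact Submodule.inner_orthogonalProjectionOnto_eq_of_mem_left v _

theorem compression_adjoint_eq_adjoint_compression_of_cofg (hK : K.CoFG) {T : E →ₗ.[ℂ] E}
    (hT : Dense (T.domain : Set E)) (hTK : Dense ((compression K T).domain : Set K)) :
    compression K T† = (compression K T)† := by
  have hle : compression K T† ≤ (compression K T)† :=
    ((adjoint_isFormalAdjoint hT).symm.compression K).le_adjoint hTK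
  refine eq_of_le_of_domain_eq hle (le_antisymm hle.1 fun v hv => ?_)
  exact mem_adjoint_domain_of_mem_adjoint_compression_domain K hK T hv

end Compression

theorem compression_adjoint_eq_adjoint_compression_general
    (S : H →ₗ.[ℂ] H)
    (hfin : FiniteDimensional ℂ ↥(S.domainᗮ))
    (St : H →ₗ.[ℂ] H) (hext : S ≤ St)
    (hdense : Dense (St.domain : Set H)) :
    Dense ((compression S.domain.topologicalClosure St).domain :
        Set ↥(S.domain.topologicalClosure)) ∧
      compression S.domain.topologicalClosure St.adjoint =
        (compression S.domain.topologicalClosure St).adjoint := by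
  have hD := dense_compression_topologicalClosure_domain hext.1
  have : FiniteDimensional ℂ S.domain.topologicalClosureᗮ := by
    rwa [Submodule.orthogonal_closure]
  exact ⟨hD, compression_adjoint_eq_adjoint_compression_of_cofg _
    (Submodule.cofg_of_finiteDimensional_orthogonal _) hdense hD⟩

/-- Let `S` be a closed symmetric operator with non-dense domain in a complex
Hilbert space, `H₀ = closure (dom S)` with `H₀ᗮ` finite-dimensional and nonzero, and let `S̃` be
a densely defined maximal dissipative extension of `S`.  Then the compression `S̃₀` of `S̃` to
`H₀` is densely defined in `H₀` and the compression of `S̃*` to `H₀` equals `(S̃₀)*`, the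
adjoint being computed in the Hilbert space `H₀`. -/
theorem compression_adjoint_eq_adjoint_compression
    (S : H →ₗ.[ℂ] H)
    (hsym : ∀ x y : S.domain, ⟪S x, (y : H)⟫ = ⟪(x : H), S y⟫)
    (hclosed : S.IsClosed)
    (hnd : ¬ Dense (S.domain : Set H))
    (hfin : FiniteDimensional ℂ ↥(S.domainᗮ)) (hne : S.domainᗮ ≠ ⊥)
    (St : H →ₗ.[ℂ] H) (hext : S ≤ St)
    (hdense : Dense (St.domain : Set H))
    (hmax : St.IsMaximalDissipative) :
    Dense ((compression S.domain.topologicalClosure St).domain :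
        Set ↥(S.domain.topologicalClosure)) ∧
      compression S.domain.topologicalClosure St.adjoint =
        (compression S.domain.topologicalClosure St).adjoint :=
  compression_adjoint_eq_adjoint_compression_general S hfin St hext hdense
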